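/- arXiv:1810.01674 — 7 statements merged into one kernel-verified Lean document; each statement's English description precedes it below -/
import Mathlib

section
/- Let a, k, m be positive integers with gcd(a,k)=1 and let a_j = jk + a for 0 ≤ j ≤ m. Then there exists an integer y with a·y ≡ 1 (mod k) such that for all real t, exp(2πi/k)·γ_a(t) = γ_a(t + y/k). In particular, the image of γ_a is invariant under rotation by angle 2π/k about the origin. -/
/-! All frequencies `j * k + a` are congruent to `a` modulo `k`, so for an inverse `y` of `a`
modulo `k` the shift `t ↦ t + y / k` multiplies every term by the same factor
`exp (2πi (jk + a) y / k) = exp (2πi / k)`. -/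

open Complex Finset

theorem Complex.exp_two_pi_I_mul_div_of_modEq_one {n k : ℤ} (h : n ≡ 1 [ZMOD k]) :
    exp (2 * Real.pi * I * n / k) = exp (2 * Real.pi * I / k) := by
  obtain ⟨c, hc⟩ := Int.modEq_iff_dvd.mp h.symm
  rcases eq_or_ne k 0 with rfl | hk
  · simp_all
  · have hk' : (k : ℂ) ≠ 0 := by exact_mod_cast hk
    have hn : (n : ℂ) = 1 + k * c := by push_cast [eq_add_of_sub_eq hc]; ring
    rw [hn, show 2 * Real.pi * I * (1 + k * c) / k = 2 * Real.pi * I / k + c * (2 * Real.pi * I) by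
      field_simp, exp_add, exp_int_mul_two_pi_mul_I, mul_one]

theorem Complex.exp_two_pi_I_mul_add_div_of_mul_modEq_one {n k y : ℤ} (h : n * y ≡ 1 [ZMOD k])
    (t : ℂ) :
    exp (2 * Real.pi * I * n * (t + y / k)) = exp (2 * Real.pi * I / k) * exp (2 * Real.pi * I * n * t) := by
  rw [← exp_two_pi_I_mul_div_of_modEq_one h, ← exp_add]
  push_cast
  ring_nf

theorem gamma_rotation_invariance_general (a k m : ℕ)
    (hcop : Nat.gcd a k = 1) :
    ∃ y : ℤ, (a : ℤ) * y ≡ 1 [ZMOD k] ∧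
      ∀ t : ℝ,
        Complex.exp (2 * Real.pi * Complex.I / (k : ℂ)) *
          (∑ j ∈ Finset.range (m + 1),
            Complex.exp (2 * Real.pi * Complex.I * ((j * k + a : ℕ) : ℂ) * (t : ℂ))) =
        ∑ j ∈ Finset.range (m + 1),
          Complex.exp (2 * Real.pi * Complex.I * ((j * k + a : ℕ) : ℂ) * ((t : ℂ) + (y : ℂ) / (k : ℂ))) := by
  obtain ⟨y, hy⟩ := Int.mod_coprime hcop
  refine ⟨y, hy, fun t => ?_⟩
  rw [mul_sum]
  refine sum_congr rfl fun j _ => ?_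
  have hfreq : ((j * k + a : ℕ) : ℤ) * y ≡ 1 [ZMOD k] := by
    have : ((j * k + a : ℕ) : ℤ) ≡ a [ZMOD k] := by
      push_cast
      exact Int.modEq_iff_dvd.mpr ⟨-j, by ring⟩
    exact (this.mul_right y).trans hy
  exact_mod_cast (exp_two_pi_I_mul_add_div_of_mul_modEq_one hfreq (t : ℂ)).symm

theorem gamma_rotation_invariance (a k m : ℕ) (ha : 0 < a) (hk : 0 < k) (hm : 0 < m)
    (hcop : Nat.gcd a k = 1) :
    ∃ y : ℤ, (a : ℤ) * y ≡ 1 [ZMOD k] ∧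
      ∀ t : ℝ,
        Complex.exp (2 * Real.pi * Complex.I / (k : ℂ)) *
          (∑ j ∈ Finset.range (m + 1),
            Complex.exp (2 * Real.pi * Complex.I * ((j * k + a : ℕ) : ℂ) * (t : ℂ))) =
        ∑ j ∈ Finset.range (m + 1),
          Complex.exp (2 * Real.pi * Complex.I * ((j * k + a : ℕ) : ℂ) * ((t : ℂ) + (y : ℂ) / (k : ℂ))) :=
  gamma_rotation_invariance_general a k m hcop
end

section
/- Let a < b be coprime positive integers and t ∈ [0,1]. Then Im(γ_{a,b}(t)) = 0 if and only if t = j/(2(a+b)) for some even integer j with 0 ≤ j ≤ 2(a+b), or t = h/(2(b−a)) for some odd integer h with 0 ≤ h ≤ 2(b−a). -/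
open Complex

theorem gamma_im_eq_zero_iff (a b : ℕ) (ha : 0 < a) (hab : a < b) (hcop : Nat.gcd a b = 1)
    (t : ℝ) (ht : t ∈ Set.Icc (0 : ℝ) 1) :
    (Complex.exp (2 * Real.pi * Complex.I * (a : ℂ) * (t : ℂ)) +
      Complex.exp (2 * Real.pi * Complex.I * (b : ℂ) * (t : ℂ))).im = 0 ↔
    (∃ j : ℤ, Even j ∧ 0 ≤ j ∧ j ≤ 2 * ((a : ℤ) + b) ∧ t = (j : ℝ) / (2 * ((a : ℝ) + b))) ∨
    (∃ h : ℤ, Odd h ∧ 0 ≤ h ∧ h ≤ 2 * ((b : ℤ) - a) ∧ t = (h : ℝ) / (2 * ((b : ℝ) - a))) := by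
  obtain ⟨ht0, ht1⟩ := ht
  have hπ : (0:ℝ) < Real.pi := Real.pi_pos
  have hs : (0:ℝ) < (a:ℝ) + b := by positivity
  have hd : (0:ℝ) < (b:ℝ) - a := by
    have : (a:ℝ) < b := by exact_mod_cast hab
    linarith
  -- rewrite imaginary part
  have e1 : (2 * (Real.pi:ℂ) * Complex.I * (a : ℂ) * (t : ℂ))
      = ((2 * Real.pi * a * t : ℝ) : ℂ) * Complex.I := by push_cast; ring
  have e2 : (2 * (Real.pi:ℂ) * Complex.I * (b : ℂ) * (t : ℂ))
      = ((2 * Real.pi * b * t : ℝ) : ℂ) * Complex.I := by push_cast; ring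
  have him : (Complex.exp (2 * Real.pi * Complex.I * (a : ℂ) * (t : ℂ)) +
      Complex.exp (2 * Real.pi * Complex.I * (b : ℂ) * (t : ℂ))).im
      = Real.sin (2 * Real.pi * a * t) + Real.sin (2 * Real.pi * b * t) := by
    rw [Complex.add_im, e1, e2, Complex.exp_ofReal_mul_I_im, Complex.exp_ofReal_mul_I_im]
  set u : ℝ := Real.pi * ((a:ℝ) + b) * t with hu
  set v : ℝ := Real.pi * ((b:ℝ) - a) * t with hv
  have harg1 : 2 * Real.pi * (a:ℝ) * t = u - v := by rw [hu, hv]; ring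
  have harg2 : 2 * Real.pi * (b:ℝ) * t = u + v := by rw [hu, hv]; ring
  have hprod : Real.sin (2 * Real.pi * a * t) + Real.sin (2 * Real.pi * b * t)
      = 2 * Real.sin u * Real.cos v := by
    rw [harg1, harg2, Real.sin_sub, Real.sin_add]; ring
  rw [him, hprod]
  have hiff : 2 * Real.sin u * Real.cos v = 0 ↔ Real.sin u = 0 ∨ Real.cos v = 0 := by
    constructor
    · intro h
      rcases mul_eq_zero.1 h with h' | h'
      · rcases mul_eq_zero.1 h' with h'' | h''
        · norm_num at h''
        · exact Or.inl h''
      · exact Or.inr h'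
    · rintro (h | h) <;> rw [h] <;> ring
  rw [hiff]
  constructor
  · rintro (h | h)
    · -- sin (π(a+b)t) = 0
      left
      obtain ⟨n, hn⟩ := Real.sin_eq_zero_iff.1 h
      have hnt : (n:ℝ) = ((a:ℝ) + b) * t := by
        have h' : (n:ℝ) * Real.pi = (((a:ℝ) + b) * t) * Real.pi := by
          rw [hu] at hn; linarith [hn]
        exact mul_right_cancel₀ (ne_of_gt hπ) h'
      refine ⟨2 * n, even_two_mul n, ?_, ?_, ?_⟩
      · have : (0:ℝ) ≤ (n:ℝ) := by rw [hnt]; positivity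
        have : (0:ℤ) ≤ n := by exact_mod_cast this
        omega
      · have : (n:ℝ) ≤ (a:ℝ) + b := by
          rw [hnt]
          nlinarith
        have : n ≤ (a:ℤ) + b := by exact_mod_cast this
        omega
      · push_cast
        rw [eq_div_iff (by positivity)]
        rw [hnt]; ring
    · -- cos (π(b−a)t) = 0
      right
      obtain ⟨k, hk⟩ := Real.cos_eq_zero_iff.1 h
      have hkt : (2 * (k:ℝ) + 1) = 2 * ((b:ℝ) - a) * t := by
        have h' : (2 * (k:ℝ) + 1) * Real.pi = (2 * ((b:ℝ) - a) * t) * Real.pi := by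
          rw [hv] at hk; linarith [hk]
        exact mul_right_cancel₀ (ne_of_gt hπ) h'
      refine ⟨2 * k + 1, odd_two_mul_add_one k, ?_, ?_, ?_⟩
      · have : (0:ℝ) ≤ 2 * (k:ℝ) + 1 := by rw [hkt]; positivity
        have : (0:ℤ) ≤ 2 * k + 1 := by exact_mod_cast this
        omega
      · have : 2 * (k:ℝ) + 1 ≤ 2 * ((b:ℝ) - a) := by
          rw [hkt]; nlinarith
        have : 2 * k + 1 ≤ 2 * ((b:ℤ) - a) := by
          push_cast
          exact_mod_cast this
        omega
      · push_cast
        rw [eq_div_iff (by positivity)]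
        rw [mul_comm t]
        linarith [hkt]
  · rintro (⟨j, ⟨m, hm⟩, _, _, hjt⟩ | ⟨h, ⟨m, hm⟩, _, _, hht⟩)
    · left
      have : u = (m:ℝ) * Real.pi := by
        rw [hu, hjt]
        have hj : (j:ℝ) = 2 * m := by exact_mod_cast by omega
        rw [hj]
        field_simp
      rw [this]; exact Real.sin_int_mul_pi m
    · right
      rw [Real.cos_eq_zero_iff]
      refine ⟨m, ?_⟩
      rw [hv, hht]
      have hh : (h:ℝ) = 2 * m + 1 := by exact_mod_cast by omega
      rw [hh]
      field_simp
end

section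
/- Let a < b be coprime positive integers and t ∈ [0,1]. Then Re(γ_{a,b}(t)) = 0 if and only if t = j/(2(a+b)) for some odd integer j with 0 ≤ j ≤ 2(a+b), or t = h/(2(b−a)) for some odd integer h with 0 ≤ h ≤ 2(b−a). -/
open Complex

lemma cos_pi_mul_zero_iff (c t : ℝ) (hc : 0 < c) (ht0 : 0 ≤ t) (ht1 : t ≤ 1) :
    Real.cos (Real.pi * c * t) = 0 ↔
      ∃ j : ℤ, Odd j ∧ 0 ≤ j ∧ (j : ℝ) ≤ 2 * c ∧ t = (j : ℝ) / (2 * c) := by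
  have hπ := Real.pi_pos
  rw [Real.cos_eq_zero_iff]
  constructor
  · rintro ⟨k, hk⟩
    refine ⟨2 * k + 1, ⟨k, by ring⟩, ?_, ?_, ?_⟩
    · have h1 : ((2 * k + 1 : ℤ) : ℝ) = 2 * c * t := by
        push_cast
        field_simp at hk
        nlinarith [hk]
      have : (0:ℝ) ≤ ((2 * k + 1 : ℤ) : ℝ) := by rw [h1]; positivity
      exact_mod_cast this
    · have h1 : ((2 * k + 1 : ℤ) : ℝ) = 2 * c * t := by
        push_cast
        field_simp at hk
        nlinarith [hk]
      rw [h1]; nlinarith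
    · have h1 : ((2 * k + 1 : ℤ) : ℝ) = 2 * c * t := by
        push_cast
        field_simp at hk
        nlinarith [hk]
      rw [h1]; field_simp
  · rintro ⟨j, ⟨k, rfl⟩, -, -, rfl⟩
    refine ⟨k, ?_⟩
    push_cast
    field_simp

theorem gamma_re_eq_zero_iff (a b : ℕ) (ha : 0 < a) (hab : a < b) (hcop : Nat.gcd a b = 1)
    (t : ℝ) (ht : t ∈ Set.Icc (0 : ℝ) 1) :
    (Complex.exp (2 * Real.pi * Complex.I * (a : ℂ) * (t : ℂ)) +
      Complex.exp (2 * Real.pi * Complex.I * (b : ℂ) * (t : ℂ))).re = 0 ↔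
    (∃ j : ℤ, Odd j ∧ 0 ≤ j ∧ j ≤ 2 * ((a : ℤ) + b) ∧ t = (j : ℝ) / (2 * ((a : ℝ) + b))) ∨
    (∃ h : ℤ, Odd h ∧ 0 ≤ h ∧ h ≤ 2 * ((b : ℤ) - a) ∧ t = (h : ℝ) / (2 * ((b : ℝ) - a))) := by
  obtain ⟨ht0, ht1⟩ := ht
  have hba : (0:ℝ) < (b:ℝ) - a := by
    have : (a:ℝ) < b := by exact_mod_cast hab
    linarith
  have hapb : (0:ℝ) < (a:ℝ) + b := by positivity
  have hrea : (Complex.exp (2 * Real.pi * Complex.I * (a : ℂ) * (t : ℂ))).re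
      = Real.cos (2 * Real.pi * a * t) := by
    have : (2 * Real.pi * Complex.I * (a : ℂ) * (t : ℂ))
        = ((2 * Real.pi * a * t : ℝ) : ℂ) * Complex.I := by push_cast; ring
    rw [this, Complex.exp_ofReal_mul_I_re]
  have hreb : (Complex.exp (2 * Real.pi * Complex.I * (b : ℂ) * (t : ℂ))).re
      = Real.cos (2 * Real.pi * b * t) := by
    have : (2 * Real.pi * Complex.I * (b : ℂ) * (t : ℂ))
        = ((2 * Real.pi * b * t : ℝ) : ℂ) * Complex.I := by push_cast; ring
    rw [this, Complex.exp_ofReal_mul_I_re]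
  rw [Complex.add_re, hrea, hreb, Real.cos_add_cos]
  have e1 : (2 * Real.pi * a * t + 2 * Real.pi * b * t) / 2 = Real.pi * ((a:ℝ) + b) * t := by
    ring
  have e2 : (2 * Real.pi * a * t - 2 * Real.pi * b * t) / 2 = -(Real.pi * ((b:ℝ) - a) * t) := by
    ring
  rw [e1, e2, Real.cos_neg]
  rw [mul_eq_zero, mul_eq_zero]
  simp only [OfNat.ofNat_ne_zero, false_or]
  rw [cos_pi_mul_zero_iff ((a:ℝ) + b) t hapb ht0 ht1,
    cos_pi_mul_zero_iff ((b:ℝ) - a) t hba ht0 ht1]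
  constructor
  · rintro (⟨j, hj, h0, hle, rfl⟩ | ⟨j, hj, h0, hle, rfl⟩)
    · left
      exact ⟨j, hj, h0, by exact_mod_cast hle, rfl⟩
    · right
      refine ⟨j, hj, h0, ?_, by push_cast; ring_nf⟩
      have : (j:ℝ) ≤ ((2 * ((b:ℤ) - a) : ℤ) : ℝ) := by push_cast; linarith
      exact_mod_cast this
  · rintro (⟨j, hj, h0, hle, rfl⟩ | ⟨j, hj, h0, hle, rfl⟩)
    · left
      exact ⟨j, hj, h0, by exact_mod_cast hle, rfl⟩
    · right
      refine ⟨j, hj, h0, ?_, by push_cast; ring_nf⟩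
      have : (j:ℝ) ≤ ((2 * ((b:ℤ) - a) : ℤ) : ℝ) := by exact_mod_cast hle
      push_cast at this ⊢
      linarith
end

section
/- Let a < b be coprime positive integers, and let t = j/(a+b), t' = j'/(a+b) with integers 0 < j, j' < a+b and j ≠ j'. Then γ_{a,b}(t) = γ_{a,b}(t') if and only if j + j' = a + b. -/
open Complex
open scoped Real

/-!
Put `n = a + b`. Since `b * j ≡ -a * j (mod n)`, the two terms of `γ(j / n)` are conjugate points
of the unit circle and `γ(j / n) = 2 cos (2π a j / n)`. So `γ(j / n) = γ(j' / n)` iff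
`a * j' ≡ ± a * j (mod n)`, iff `j' ≡ ± j (mod n)` because `a` is a unit modulo `n`. For distinct
`j, j' < n` only `j' ≡ -j`, that is `j + j' = n`, is possible.
-/

theorem exp_mul_add_exp_mul_eq_two_cos (a b : ℂ) (m : ℤ) (hab : a + b ≠ 0) :
    exp (2 * π * I * a * (m / (a + b))) + exp (2 * π * I * b * (m / (a + b))) =
      2 * cos (2 * π * (a * m) / (a + b)) := by
  have ha : 2 * π * I * a * (m / (a + b)) = 2 * π * (a * m) / (a + b) * I := by ring
  have hb : 2 * π * I * b * (m / (a + b)) = m * (2 * π * I) + -(2 * π * (a * m) / (a + b)) * I := by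
    field_simp
    ring
  rw [ha, hb, exp_add, exp_int_mul_two_pi_mul_I, one_mul, two_cos]

theorem cos_two_pi_mul_div_eq_cos_iff {n : ℕ} (hn : n ≠ 0) (p q : ℤ) :
    cos (2 * π * p / n) = cos (2 * π * q / n) ↔ (n : ℤ) ∣ q - p ∨ (n : ℤ) ∣ q + p := by
  have hscale : ∀ x y : ℂ, 2 * π * x / n = 2 * π * y / n ↔ x = y := fun x y => by
    have : (2 * π / n : ℂ) ≠ 0 := by simp [hn, Real.pi_ne_zero]
    rw [mul_div_right_comm, mul_div_right_comm _ y, mul_right_inj' this]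
  have hshift : ∀ k : ℤ, 2 * k * π + 2 * π * p / n = 2 * π * ((n * k + p : ℤ) : ℂ) / n ∧
      2 * k * π - 2 * π * p / n = 2 * π * ((n * k - p : ℤ) : ℂ) / n := fun k => by
    push_cast
    constructor <;> field_simp
  simp only [cos_eq_cos_iff, hshift, hscale, Int.cast_inj, exists_or]
  exact or_congr (exists_congr fun k => by omega) (exists_congr fun k => by omega)

theorem natCast_dvd_sub_or_dvd_add_iff_add_eq {n j j' : ℕ} (hj : j < n) (hj' : j' < n)
    (hne : j ≠ j') :
    ((n : ℤ) ∣ j' - j ∨ (n : ℤ) ∣ j' + j) ↔ j + j' = n := by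
  have hsub : ¬ (n : ℤ) ∣ j' - j := fun h => hne ((Nat.modEq_iff_dvd.2 h).eq_of_lt_of_lt hj hj')
  have hadd : (n : ℤ) ∣ j' + j ↔ n ∣ j + j' := by rw [add_comm]; norm_cast
  rw [or_iff_right hsub, hadd]
  exact ⟨fun h => Nat.eq_of_dvd_of_lt_two_mul (by omega) h (by omega), fun h => h ▸ dvd_rfl⟩

theorem gamma_self_intersect_real_axis_general (a b : ℕ)
    (hcop : Nat.gcd a b = 1) (j j' : ℕ)
    (hjb : j < a + b) (hj'b : j' < a + b) (hne : j ≠ j') :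
    (Complex.exp (2 * Real.pi * Complex.I * (a : ℂ) * ((j : ℂ) / ((a : ℂ) + b))) +
        Complex.exp (2 * Real.pi * Complex.I * (b : ℂ) * ((j : ℂ) / ((a : ℂ) + b))) =
      Complex.exp (2 * Real.pi * Complex.I * (a : ℂ) * ((j' : ℂ) / ((a : ℂ) + b))) +
        Complex.exp (2 * Real.pi * Complex.I * (b : ℂ) * ((j' : ℂ) / ((a : ℂ) + b)))) ↔
    j + j' = a + b := by
  have hn : a + b ≠ 0 := by omega
  have hγ : ∀ m : ℕ,
      exp (2 * π * I * a * (m / (a + b))) + exp (2 * π * I * b * (m / (a + b))) =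
        2 * cos (2 * π * ((a * m : ℤ) : ℂ) / ((a + b : ℕ) : ℂ)) := fun m => by
    have h := exp_mul_add_exp_mul_eq_two_cos a b m (by exact_mod_cast hn)
    push_cast at h ⊢
    exact h
  have hcop' : IsCoprime ((a + b : ℕ) : ℤ) a :=
    Nat.isCoprime_iff_coprime.2 (Nat.coprime_self_add_left.2 (Nat.coprime_comm.1 hcop))
  have hcancel : ∀ x : ℤ, ((a + b : ℕ) : ℤ) ∣ a * x ↔ ((a + b : ℕ) : ℤ) ∣ x :=
    fun x => ⟨hcop'.dvd_of_dvd_mul_left, (dvd_mul_of_dvd_right · _)⟩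
  rw [hγ, hγ, mul_right_inj' two_ne_zero, cos_two_pi_mul_div_eq_cos_iff hn, ← mul_sub, ← mul_add,
    hcancel, hcancel]
  exact natCast_dvd_sub_or_dvd_add_iff_add_eq hjb hj'b hne

theorem gamma_self_intersect_real_axis (a b : ℕ) (ha : 0 < a) (hab : a < b)
    (hcop : Nat.gcd a b = 1) (j j' : ℕ) (hj : 0 < j) (hj' : 0 < j')
    (hjb : j < a + b) (hj'b : j' < a + b) (hne : j ≠ j') :
    (Complex.exp (2 * Real.pi * Complex.I * (a : ℂ) * ((j : ℂ) / ((a : ℂ) + b))) +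
        Complex.exp (2 * Real.pi * Complex.I * (b : ℂ) * ((j : ℂ) / ((a : ℂ) + b))) =
      Complex.exp (2 * Real.pi * Complex.I * (a : ℂ) * ((j' : ℂ) / ((a : ℂ) + b))) +
        Complex.exp (2 * Real.pi * Complex.I * (b : ℂ) * ((j' : ℂ) / ((a : ℂ) + b)))) ↔
    j + j' = a + b :=
  gamma_self_intersect_real_axis_general a b hcop j j' hjb hj'b hne
end

section
/- Let a < b be coprime positive integers with b − a ≥ 4, let j be an integer with 0 ≤ j ≤ a+b and t_j = j/(a+b). Then γ_{a,b} restricted to the interval [t_j, t_j + 2/(b²−a²)] is injective. -/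
open Complex

/-! Writing `γ(u) = e^{iπ(a+b)u} · 2cos(π(b-a)u)`, an equality `γ(s) = γ(t)` becomes
`e^{iπ(a+b)(s-t)} cos(π(b-a)s) = cos(π(b-a)t)`, whose imaginary part is
`sin(π(a+b)(s-t)) · cos(π(b-a)s) = 0`. If the sine vanishes, `s = t` because
`π(a+b)|s-t| < π`; if the cosine vanishes, so does `cos(π(b-a)t)`, hence
`sin(π(b-a)(s-t)) = 0` and `s = t` because `π(b-a)|s-t| < π`. Both bounds hold on
intervals of length `2/(b²-a²)` once `b - a > 2`. -/

lemma eq_of_sin_mul_sub_eq_zero {e s t : ℝ} (he : e ≠ 0) (h : Real.sin (e * (s - t)) = 0)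
    (hlt : |e * (s - t)| < Real.pi) : s = t := by
  have hzero := (Real.sin_eq_zero_iff_of_lt_of_lt (abs_lt.1 hlt).1 (abs_lt.1 hlt).2).1 h
  exact sub_eq_zero.1 ((mul_eq_zero.1 hzero).resolve_left he)

lemma exp_add_exp_eq_exp_mul_two_cos (c d u : ℝ) :
    exp (((d - c) * u : ℝ) * I) + exp (((d + c) * u : ℝ) * I) =
      exp ((d * u : ℝ) * I) * ((2 * Real.cos (c * u) : ℝ) : ℂ) := by
  push_cast
  rw [mul_assoc, two_cos, mul_add, ← exp_add, ← exp_add]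
  ring_nf

lemma eq_of_exp_mul_cos_eq {c d s t : ℝ} (hc : c ≠ 0) (hd : d ≠ 0)
    (hcst : |c * (s - t)| < Real.pi) (hdst : |d * (s - t)| < Real.pi)
    (h : exp ((d * s : ℝ) * I) * (Real.cos (c * s) : ℂ) =
      exp ((d * t : ℝ) * I) * (Real.cos (c * t) : ℂ)) :
    s = t := by
  have hrot : exp ((d * (s - t) : ℝ) * I) * (Real.cos (c * s) : ℂ) = Real.cos (c * t) := by
    apply mul_left_cancel₀ (exp_ne_zero ((d * t : ℝ) * I))
    rw [← h, ← mul_assoc, ← exp_add]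
    push_cast
    ring_nf
  have him : Real.sin (d * (s - t)) * Real.cos (c * s) = 0 := by
    simpa only [im_mul_ofReal, exp_ofReal_mul_I_im, ofReal_im] using congrArg im hrot
  rcases mul_eq_zero.1 him with hsin | hcos
  · exact eq_of_sin_mul_sub_eq_zero hd hsin hdst
  · have hcos' : Real.cos (c * t) = 0 := by
      rw [hcos, ofReal_zero, mul_zero, eq_comm, ofReal_eq_zero] at hrot
      exact hrot
    have hsin : Real.sin (c * (s - t)) = 0 := by
      rw [mul_sub, Real.sin_sub, hcos, hcos']
      ring
    exact eq_of_sin_mul_sub_eq_zero hc hsin hcst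

lemma injOn_exp_mul_two_cos_Icc {c d δ : ℝ} (hc : 0 < c) (hd : 0 < d)
    (hcδ : c * δ < Real.pi) (hdδ : d * δ < Real.pi) (x : ℝ) :
    Set.InjOn (fun u : ℝ => exp ((d * u : ℝ) * I) * ((2 * Real.cos (c * u) : ℝ) : ℂ))
      (Set.Icc x (x + δ)) := by
  intro s hs t ht hst
  have hδ : |s - t| ≤ δ := abs_sub_le_iff.2 ⟨by linarith [hs.2, ht.1], by linarith [hs.1, ht.2]⟩
  have bound : ∀ {e : ℝ}, 0 < e → e * δ < Real.pi → |e * (s - t)| < Real.pi := fun he heδ => by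
    rw [abs_mul, abs_of_pos he]
    exact (mul_le_mul_of_nonneg_left hδ he.le).trans_lt heδ
  refine eq_of_exp_mul_cos_eq hc.ne' hd.ne' (bound hc hcδ) (bound hd hdδ) ?_
  beta_reduce at hst
  rw [ofReal_mul 2, ofReal_mul 2, ofReal_ofNat] at hst
  linear_combination hst / 2

lemma pi_mul_mul_two_div_mul_lt_pi {m n : ℝ} (hm : m ≠ 0) (hn : 2 < n) :
    Real.pi * m * (2 / (m * n)) < Real.pi := by
  rw [show Real.pi * m * (2 / (m * n)) = Real.pi * (2 / n) by field_simp]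
  exact mul_lt_of_lt_one_right Real.pi_pos ((div_lt_one (by linarith)).2 hn)

theorem gamma_injective_on_interval_general (a b : ℕ) (hba : 4 ≤ b - a) (j : ℕ) :
    Set.InjOn (fun t : ℝ =>
        Complex.exp (2 * Real.pi * Complex.I * (a : ℂ) * (t : ℂ)) +
          Complex.exp (2 * Real.pi * Complex.I * (b : ℂ) * (t : ℂ)))
      (Set.Icc ((j : ℝ) / ((a : ℝ) + b))
        ((j : ℝ) / ((a : ℝ) + b) + 2 / ((b : ℝ) ^ 2 - (a : ℝ) ^ 2))) := by
  have hb : (a : ℝ) + 4 ≤ b := by exact_mod_cast (by omega : a + 4 ≤ b)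
  have ha : (0 : ℝ) ≤ a := a.cast_nonneg
  have hpi := Real.pi_pos
  have hγ : (fun t : ℝ => exp (2 * Real.pi * I * (a : ℂ) * (t : ℂ)) +
      exp (2 * Real.pi * I * (b : ℂ) * (t : ℂ))) = fun u : ℝ =>
        exp ((Real.pi * (b + a) * u : ℝ) * I) *
          ((2 * Real.cos (Real.pi * (b - a) * u) : ℝ) : ℂ) := by
    funext u
    rw [← exp_add_exp_eq_exp_mul_two_cos]
    push_cast
    ring_nf
  have hsq : (b : ℝ) ^ 2 - (a : ℝ) ^ 2 = ((b : ℝ) - a) * ((b : ℝ) + a) := by ring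
  have hcδ : Real.pi * (b - a) * (2 / ((b : ℝ) ^ 2 - (a : ℝ) ^ 2)) < Real.pi := by
    rw [hsq]
    exact pi_mul_mul_two_div_mul_lt_pi (by linarith) (by linarith)
  have hdδ : Real.pi * (b + a) * (2 / ((b : ℝ) ^ 2 - (a : ℝ) ^ 2)) < Real.pi := by
    rw [hsq, mul_comm ((b : ℝ) - a)]
    exact pi_mul_mul_two_div_mul_lt_pi (by linarith) (by linarith)
  rw [hγ]
  exact injOn_exp_mul_two_cos_Icc (mul_pos hpi (by linarith)) (mul_pos hpi (by linarith)) hcδ hdδ _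

theorem gamma_injective_on_interval (a b : ℕ) (ha : 0 < a) (hab : a < b)
    (hcop : Nat.gcd a b = 1) (hba : 4 ≤ b - a) (j : ℕ) (hj : j ≤ a + b) :
    Set.InjOn (fun t : ℝ =>
        Complex.exp (2 * Real.pi * Complex.I * (a : ℂ) * (t : ℂ)) +
          Complex.exp (2 * Real.pi * Complex.I * (b : ℂ) * (t : ℂ)))
      (Set.Icc ((j : ℝ) / ((a : ℝ) + b))
        ((j : ℝ) / ((a : ℝ) + b) + 2 / ((b : ℝ) ^ 2 - (a : ℝ) ^ 2))) :=
  gamma_injective_on_interval_general a b hba j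
end

section
/- Let a < b be positive integers. The curvature of the plane curve t ↦ (Re γ_{a,b}(t), Im γ_{a,b}(t)) at any t where the speed is nonzero equals κ(t) = (a³ + b³ + ab(a+b)cos(2π(a−b)t)) / (a² + b² + 2ab cos(2π(a−b)t))^{3/2}, and this quantity is strictly positive whenever a ≠ b. -/
/-!
The derivatives of `x = cos (ω a s) + cos (ω b s)` and `y = sin (ω a s) + sin (ω b s)` are again
sums of two circular motions, so `x' y'' - y' x''` and `x'² + y'²` reduce, through
`sin² + cos² = 1` and `cos (A - B) = cos A cos B + sin A sin B`, to `ω³ (a³ + b³ + ab(a+b) cos θ)`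
and `ω² (a² + b² + 2ab cos θ)` with `θ = ω (a - b) t`; the powers of `ω` cancel in the curvature.
For `a, b ≥ 0` the two brackets are bounded below by `(a + b)(a - b)²` and `(a - b)²`, hence are
positive when `a ≠ b`.
-/

open Real

noncomputable def signedCurvature (x y : ℝ → ℝ) (t : ℝ) : ℝ :=
  (deriv x t * deriv (deriv y) t - deriv y t * deriv (deriv x) t) /
    ((deriv x t) ^ 2 + (deriv y t) ^ 2) ^ ((3 : ℝ) / 2)

theorem hasDerivAt_cos_mul (c t : ℝ) :
    HasDerivAt (fun s => cos (c * s)) (-(c * sin (c * t))) t := by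
  simpa [mul_comm] using ((hasDerivAt_id t).const_mul c).cos

theorem hasDerivAt_sin_mul (c t : ℝ) :
    HasDerivAt (fun s => sin (c * s)) (c * cos (c * t)) t := by
  simpa [mul_comm] using ((hasDerivAt_id t).const_mul c).sin

section TwoCircles

variable (A B : ℝ)

theorem deriv_cos_mul_add_cos_mul :
    deriv (fun s => cos (A * s) + cos (B * s)) =
      fun s => -(A * sin (A * s)) + -(B * sin (B * s)) :=
  funext fun t => ((hasDerivAt_cos_mul A t).add (hasDerivAt_cos_mul B t)).deriv

theorem deriv_sin_mul_add_sin_mul :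
    deriv (fun s => sin (A * s) + sin (B * s)) = fun s => A * cos (A * s) + B * cos (B * s) :=
  funext fun t => ((hasDerivAt_sin_mul A t).add (hasDerivAt_sin_mul B t)).deriv

theorem deriv_deriv_cos_mul_add_cos_mul (t : ℝ) :
    deriv (deriv (fun s => cos (A * s) + cos (B * s))) t =
      -(A * (A * cos (A * t))) + -(B * (B * cos (B * t))) := by
  rw [deriv_cos_mul_add_cos_mul]
  exact (((hasDerivAt_sin_mul A t).const_mul A).neg.add
    ((hasDerivAt_sin_mul B t).const_mul B).neg).deriv

theorem deriv_deriv_sin_mul_add_sin_mul (t : ℝ) :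
    deriv (deriv (fun s => sin (A * s) + sin (B * s))) t =
      A * -(A * sin (A * t)) + B * -(B * sin (B * t)) := by
  rw [deriv_sin_mul_add_sin_mul]
  exact (((hasDerivAt_cos_mul A t).const_mul A).add
    ((hasDerivAt_cos_mul B t).const_mul B)).deriv

end TwoCircles

theorem sq_add_sq_add_two_mul_mul_cos_nonneg (a b θ : ℝ) :
    0 ≤ a ^ 2 + b ^ 2 + 2 * a * b * cos θ := by
  have h : a ^ 2 + b ^ 2 + 2 * a * b * cos θ = (a + b * cos θ) ^ 2 + (b * sin θ) ^ 2 := by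
    linear_combination -b ^ 2 * sin_sq_add_cos_sq θ
  rw [h]
  positivity

theorem sq_add_sq_add_two_mul_mul_cos_pos {a b : ℝ} (ha : 0 ≤ a) (hb : 0 ≤ b) (hab : a ≠ b)
    (θ : ℝ) : 0 < a ^ 2 + b ^ 2 + 2 * a * b * cos θ := by
  have hsq : 0 < (a - b) ^ 2 := by positivity [sub_ne_zero.2 hab]
  have hcos : 0 ≤ 1 + cos θ := by linarith [neg_one_le_cos θ]
  nlinarith [mul_nonneg (mul_nonneg ha hb) hcos]

theorem pow_three_add_pow_three_add_mul_cos_pos {a b : ℝ} (ha : 0 ≤ a) (hb : 0 ≤ b)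
    (hab : a ≠ b) (θ : ℝ) : 0 < a ^ 3 + b ^ 3 + a * b * (a + b) * cos θ := by
  have hsq : 0 < (a - b) ^ 2 := by positivity [sub_ne_zero.2 hab]
  have hsum : 0 < a + b := by
    by_contra!
    exact hab (by linarith)
  have hcos : 0 ≤ 1 + cos θ := by linarith [neg_one_le_cos θ]
  nlinarith [mul_pos hsum hsq, mul_nonneg (mul_nonneg (mul_nonneg ha hb) hsum.le) hcos]

theorem sq_rpow_three_halves {ω : ℝ} (hω : 0 ≤ ω) : (ω ^ 2) ^ ((3 : ℝ) / 2) = ω ^ 3 := by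
  rw [← rpow_natCast, ← rpow_mul hω, ← rpow_natCast]
  norm_num

theorem signedCurvature_cos_add_cos {ω : ℝ} (hω : 0 < ω) (a b t : ℝ) :
    signedCurvature (fun s => cos (ω * a * s) + cos (ω * b * s))
        (fun s => sin (ω * a * s) + sin (ω * b * s)) t =
      (a ^ 3 + b ^ 3 + a * b * (a + b) * cos (ω * (a - b) * t)) /
        (a ^ 2 + b ^ 2 + 2 * a * b * cos (ω * (a - b) * t)) ^ ((3 : ℝ) / 2) := by
  have hθ : cos (ω * (a - b) * t) =
      cos (ω * a * t) * cos (ω * b * t) + sin (ω * a * t) * sin (ω * b * t) := by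
    rw [← cos_sub]; ring_nf
  have hnum : deriv (fun s => cos (ω * a * s) + cos (ω * b * s)) t *
        deriv (deriv (fun s => sin (ω * a * s) + sin (ω * b * s))) t -
      deriv (fun s => sin (ω * a * s) + sin (ω * b * s)) t *
        deriv (deriv (fun s => cos (ω * a * s) + cos (ω * b * s))) t =
      ω ^ 3 * (a ^ 3 + b ^ 3 + a * b * (a + b) * cos (ω * (a - b) * t)) := by
    rw [deriv_deriv_cos_mul_add_cos_mul, deriv_deriv_sin_mul_add_sin_mul,
      deriv_cos_mul_add_cos_mul, deriv_sin_mul_add_sin_mul, hθ]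
    linear_combination (ω ^ 3 * a ^ 3) * sin_sq_add_cos_sq (ω * a * t) +
      (ω ^ 3 * b ^ 3) * sin_sq_add_cos_sq (ω * b * t)
  have hspeed : deriv (fun s => cos (ω * a * s) + cos (ω * b * s)) t ^ 2 +
        deriv (fun s => sin (ω * a * s) + sin (ω * b * s)) t ^ 2 =
      ω ^ 2 * (a ^ 2 + b ^ 2 + 2 * a * b * cos (ω * (a - b) * t)) := by
    rw [deriv_cos_mul_add_cos_mul, deriv_sin_mul_add_sin_mul, hθ]
    linear_combination (ω ^ 2 * a ^ 2) * sin_sq_add_cos_sq (ω * a * t) +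
      (ω ^ 2 * b ^ 2) * sin_sq_add_cos_sq (ω * b * t)
  rw [signedCurvature, hnum, hspeed,
    mul_rpow (by positivity) (sq_add_sq_add_two_mul_mul_cos_nonneg _ _ _),
    sq_rpow_three_halves hω.le, mul_div_mul_left _ _ (by positivity)]

theorem two_pi_mul_I_mul_natCast (n : ℕ) (s : ℝ) :
    2 * π * Complex.I * (n : ℂ) * (s : ℂ) = ((2 * π * n * s : ℝ) : ℂ) * Complex.I := by
  push_cast
  ring

theorem gamma_curvature_general (a b : ℕ) (hab : a < b) (t : ℝ)
    (x y : ℝ → ℝ)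
    (hx : x = fun s : ℝ => (Complex.exp (2 * Real.pi * Complex.I * (a : ℂ) * (s : ℂ)) +
        Complex.exp (2 * Real.pi * Complex.I * (b : ℂ) * (s : ℂ))).re)
    (hy : y = fun s : ℝ => (Complex.exp (2 * Real.pi * Complex.I * (a : ℂ) * (s : ℂ)) +
        Complex.exp (2 * Real.pi * Complex.I * (b : ℂ) * (s : ℂ))).im) :
    (deriv x t * deriv (deriv y) t - deriv y t * deriv (deriv x) t) /
        ((deriv x t) ^ 2 + (deriv y t) ^ 2) ^ ((3 : ℝ) / 2) =
      ((a : ℝ) ^ 3 + (b : ℝ) ^ 3 + (a : ℝ) * b * ((a : ℝ) + b) * Real.cos (2 * Real.pi * ((a : ℝ) - b) * t)) /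
        ((a : ℝ) ^ 2 + (b : ℝ) ^ 2 + 2 * a * b * Real.cos (2 * Real.pi * ((a : ℝ) - b) * t)) ^ ((3 : ℝ) / 2) ∧
    0 < ((a : ℝ) ^ 3 + (b : ℝ) ^ 3 + (a : ℝ) * b * ((a : ℝ) + b) * Real.cos (2 * Real.pi * ((a : ℝ) - b) * t)) /
        ((a : ℝ) ^ 2 + (b : ℝ) ^ 2 + 2 * a * b * Real.cos (2 * Real.pi * ((a : ℝ) - b) * t)) ^ ((3 : ℝ) / 2) := by
  have hx' : x = fun s => cos (2 * π * a * s) + cos (2 * π * b * s) := by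
    subst hx
    simp only [Complex.add_re, two_pi_mul_I_mul_natCast, Complex.exp_ofReal_mul_I_re]
  have hy' : y = fun s => sin (2 * π * a * s) + sin (2 * π * b * s) := by
    subst hy
    simp only [Complex.add_im, two_pi_mul_I_mul_natCast, Complex.exp_ofReal_mul_I_im]
  have ha : (0 : ℝ) ≤ a := a.cast_nonneg
  have hb : (0 : ℝ) ≤ b := b.cast_nonneg
  have hab' : (a : ℝ) ≠ b := by exact_mod_cast hab.ne
  refine ⟨?_, div_pos (pow_three_add_pow_three_add_mul_cos_pos ha hb hab' _)
    (rpow_pos_of_pos (sq_add_sq_add_two_mul_mul_cos_pos ha hb hab' _) _)⟩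
  rw [hx', hy']
  exact signedCurvature_cos_add_cos two_pi_pos a b t

theorem gamma_curvature (a b : ℕ) (ha : 0 < a) (hab : a < b) (t : ℝ)
    (x y : ℝ → ℝ)
    (hx : x = fun s : ℝ => (Complex.exp (2 * Real.pi * Complex.I * (a : ℂ) * (s : ℂ)) +
        Complex.exp (2 * Real.pi * Complex.I * (b : ℂ) * (s : ℂ))).re)
    (hy : y = fun s : ℝ => (Complex.exp (2 * Real.pi * Complex.I * (a : ℂ) * (s : ℂ)) +
        Complex.exp (2 * Real.pi * Complex.I * (b : ℂ) * (s : ℂ))).im)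
    (hspeed : (deriv x t) ^ 2 + (deriv y t) ^ 2 ≠ 0) :
    (deriv x t * deriv (deriv y) t - deriv y t * deriv (deriv x) t) /
        ((deriv x t) ^ 2 + (deriv y t) ^ 2) ^ ((3 : ℝ) / 2) =
      ((a : ℝ) ^ 3 + (b : ℝ) ^ 3 + (a : ℝ) * b * ((a : ℝ) + b) * Real.cos (2 * Real.pi * ((a : ℝ) - b) * t)) /
        ((a : ℝ) ^ 2 + (b : ℝ) ^ 2 + 2 * a * b * Real.cos (2 * Real.pi * ((a : ℝ) - b) * t)) ^ ((3 : ℝ) / 2) ∧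
    0 < ((a : ℝ) ^ 3 + (b : ℝ) ^ 3 + (a : ℝ) * b * ((a : ℝ) + b) * Real.cos (2 * Real.pi * ((a : ℝ) - b) * t)) /
        ((a : ℝ) ^ 2 + (b : ℝ) ^ 2 + 2 * a * b * Real.cos (2 * Real.pi * ((a : ℝ) - b) * t)) ^ ((3 : ℝ) / 2) :=
  gamma_curvature_general a b hab t x y hx hy
end

section
/- Let k ≥ 4 be an integer and let γ(t) = exp(2πi t) + exp(2πi(k+1)t). If t, t' ∈ [0,1] with t ≠ t', γ(t) = γ(t'), and γ(t) ≠ 0, then there exist integers 0 ≤ j, j' ≤ k(k+2) such that t = j/(k(k+2)) and t' = j'/(k(k+2)). -/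
/-!
Writing `γ_{a,b}(s) = e^{iπ(a+b)s} · 2cos(π(b-a)s)`, an equality `γ(t) = γ(t') ≠ 0` says that
`e^{iθ} cos(π(b-a)t) = cos(π(b-a)t')` with `θ = π(a+b)(t-t')`, so `sin θ = 0` and
`cos(π(b-a)t + θ) = cos(π(b-a)t')`. For `a = 1, b = k+1` this yields integers `N, m` with
`(k+2)(t-t') = N` and either `k(t'-t) = 2m + N`, which forces `t - t' ∈ ℤ`, i.e. `{t, t'} = {0, 1}`,
or `k(t'+t) = 2m - N`, which makes both `k(k+2)t` and `k(k+2)t'` integers.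
-/

open Complex

noncomputable def gammaCurve (a b s : ℝ) : ℂ :=
  exp (2 * Real.pi * I * a * s) + exp (2 * Real.pi * I * b * s)

lemma gammaCurve_eq_exp_mul_cos (a b s : ℝ) :
    gammaCurve a b s =
      exp ((Real.pi * (a + b) * s : ℝ) * I) * (2 * (Real.cos (Real.pi * (b - a) * s) : ℂ)) := by
  rw [gammaCurve, ofReal_cos, two_cos, mul_add, ← Complex.exp_add, ← Complex.exp_add, add_comm]
  push_cast
  congr 2 <;> ring

lemma sin_eq_zero_and_cos_eq_of_gammaCurve_eq {a b t t' : ℝ} (h : gammaCurve a b t = gammaCurve a b t')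
    (h0 : gammaCurve a b t ≠ 0) :
    Real.sin (Real.pi * (a + b) * (t - t')) = 0 ∧
      Real.cos (Real.pi * (b - a) * t + Real.pi * (a + b) * (t - t')) =
        Real.cos (Real.pi * (b - a) * t') := by
  simp only [gammaCurve_eq_exp_mul_cos] at h h0
  set c := Real.cos (Real.pi * (b - a) * t)
  set c' := Real.cos (Real.pi * (b - a) * t')
  have hc : c ≠ 0 := fun hc ↦ h0 (by simp [hc])
  have hshift : exp ((Real.pi * (a + b) * t : ℝ) * I) =
      exp ((Real.pi * (a + b) * (t - t') : ℝ) * I) * exp ((Real.pi * (a + b) * t' : ℝ) * I) := by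
    rw [← Complex.exp_add]; push_cast; congr 1; ring
  have hrot : exp ((Real.pi * (a + b) * (t - t') : ℝ) * I) * c = c' := by
    refine mul_left_cancel₀ (mul_ne_zero two_ne_zero (Complex.exp_ne_zero
      ((Real.pi * (a + b) * t' : ℝ) * I))) ?_
    linear_combination h - (2 * c : ℂ) * hshift
  have him := congrArg Complex.im hrot
  have hre := congrArg Complex.re hrot
  simp only [mul_re, mul_im, exp_ofReal_mul_I_re, exp_ofReal_mul_I_im, ofReal_re, ofReal_im,
    mul_zero, sub_zero, zero_add] at him hre
  have hsin := (mul_eq_zero.mp him).resolve_right hc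
  refine ⟨hsin, ?_⟩
  rw [Real.cos_add, hsin, mul_zero, sub_zero, ← hre, mul_comm]

lemma exists_int_of_gammaCurve_eq {a b t t' : ℝ} (h : gammaCurve a b t = gammaCurve a b t')
    (h0 : gammaCurve a b t ≠ 0) :
    ∃ N m : ℤ, (a + b) * (t - t') = N ∧
      ((b - a) * (t' - t) = 2 * m + N ∨ (b - a) * (t' + t) = 2 * m - N) := by
  obtain ⟨hsin, hcos⟩ := sin_eq_zero_and_cos_eq_of_gammaCurve_eq h h0
  obtain ⟨N, hN⟩ := Real.sin_eq_zero_iff.mp hsin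
  obtain ⟨m, hm | hm⟩ := Real.cos_eq_cos_iff.mp hcos
  all_goals
    refine ⟨N, m, mul_left_cancel₀ Real.pi_ne_zero (by linear_combination -hN), ?_⟩
  · exact .inl <| mul_left_cancel₀ Real.pi_ne_zero (by linear_combination hm - hN)
  · exact .inr <| mul_left_cancel₀ Real.pi_ne_zero (by linear_combination hm + hN)

lemma eq_zero_or_eq_one_of_sub_eq_intCast {t t' : ℝ} (ht : t ∈ Set.Icc (0 : ℝ) 1)
    (ht' : t' ∈ Set.Icc (0 : ℝ) 1) (hne : t ≠ t') {c : ℤ} (h : t - t' = c) : t = 0 ∨ t = 1 := by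
  obtain ⟨ht0, ht1⟩ := ht
  obtain ⟨ht0', ht1'⟩ := ht'
  have hc0 : c ≠ 0 := by
    rintro rfl
    exact hne (by simpa [sub_eq_zero] using h)
  have hc_le : c ≤ 1 := by exact_mod_cast (show (c : ℝ) ≤ 1 by linarith)
  have hc_ge : -1 ≤ c := by exact_mod_cast (show (-1 : ℝ) ≤ c by linarith)
  obtain rfl | rfl : c = -1 ∨ c = 1 := by omega
  · left; push_cast at h; linarith
  · right; push_cast at h; linarith

lemma exists_int_mul_eq_of_gamma_self_intersection (k : ℕ) {t t' : ℝ}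
    (ht : t ∈ Set.Icc (0 : ℝ) 1) (ht' : t' ∈ Set.Icc (0 : ℝ) 1) (hne : t ≠ t')
    (h : gammaCurve 1 (k + 1) t = gammaCurve 1 (k + 1) t') (h0 : gammaCurve 1 (k + 1) t ≠ 0) :
    ∃ z z' : ℤ, (k * (k + 2) : ℝ) * t = z ∧ (k * (k + 2) : ℝ) * t' = z' := by
  obtain ⟨N, m, hN, hm | hm⟩ := exists_int_of_gammaCurve_eq h h0
  · have hsub : t - t' = ((N + m : ℤ) : ℝ) := by push_cast; linear_combination (hN + hm) / 2
    have hsub' : t' - t = ((-(N + m) : ℤ) : ℝ) := by push_cast; linarith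
    have hint : ∀ s : ℝ, s = 0 ∨ s = 1 → ∃ z : ℤ, (k * (k + 2) : ℝ) * s = z := by
      rintro s (rfl | rfl)
      · exact ⟨0, by simp⟩
      · exact ⟨k * (k + 2), by push_cast; ring⟩
    obtain ⟨z, hz⟩ := hint t (eq_zero_or_eq_one_of_sub_eq_intCast ht ht' hne hsub)
    obtain ⟨z', hz'⟩ := hint t' (eq_zero_or_eq_one_of_sub_eq_intCast ht' ht hne.symm hsub')
    exact ⟨z, z', hz, hz'⟩
  · refine ⟨(k + 2) * m - N, (k + 2) * m - N - k * N, ?_, ?_⟩ <;> push_cast at hN hm ⊢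
    · linear_combination ((k + 2 : ℝ) * hm + k * hN) / 2
    · linear_combination ((k + 2 : ℝ) * hm - k * hN) / 2

lemma exists_nat_le_eq_div_of_mul_eq_intCast {n : ℕ} (hn : 0 < n) {t : ℝ}
    (ht : t ∈ Set.Icc (0 : ℝ) 1) {z : ℤ} (h : n * t = z) : ∃ j ≤ n, t = j / n := by
  have hn' : (0 : ℝ) < n := by exact_mod_cast hn
  have hz0 : 0 ≤ z := by exact_mod_cast h ▸ mul_nonneg hn'.le ht.1
  lift z to ℕ using hz0
  push_cast at h
  refine ⟨z, by exact_mod_cast h ▸ mul_le_of_le_one_right hn'.le ht.2, ?_⟩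
  rw [eq_div_iff hn'.ne', mul_comm, h]

theorem gamma_self_intersections (k : ℕ) (hk : 4 ≤ k) (t t' : ℝ)
    (ht : t ∈ Set.Icc (0 : ℝ) 1) (ht' : t' ∈ Set.Icc (0 : ℝ) 1) (hne : t ≠ t')
    (heq : Complex.exp (2 * Real.pi * Complex.I * (t : ℂ)) +
        Complex.exp (2 * Real.pi * Complex.I * ((k : ℂ) + 1) * (t : ℂ)) =
      Complex.exp (2 * Real.pi * Complex.I * (t' : ℂ)) +
        Complex.exp (2 * Real.pi * Complex.I * ((k : ℂ) + 1) * (t' : ℂ)))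
    (hnz : Complex.exp (2 * Real.pi * Complex.I * (t : ℂ)) +
        Complex.exp (2 * Real.pi * Complex.I * ((k : ℂ) + 1) * (t : ℂ)) ≠ 0) :
    ∃ j j' : ℕ, j ≤ k * (k + 2) ∧ j' ≤ k * (k + 2) ∧
      t = (j : ℝ) / ((k : ℝ) * (k + 2)) ∧ t' = (j' : ℝ) / ((k : ℝ) * (k + 2)) := by
  have hγ (s : ℝ) : Complex.exp (2 * Real.pi * Complex.I * (s : ℂ)) +
      Complex.exp (2 * Real.pi * Complex.I * ((k : ℂ) + 1) * (s : ℂ)) = gammaCurve 1 (k + 1) s := by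
    simp [gammaCurve]
  rw [hγ, hγ] at heq
  rw [hγ] at hnz
  obtain ⟨z, z', hz, hz'⟩ := exists_int_mul_eq_of_gamma_self_intersection k ht ht' hne heq hnz
  have hn : 0 < k * (k + 2) := Nat.mul_pos (by omega) (by omega)
  obtain ⟨j, hj, rfl⟩ := exists_nat_le_eq_div_of_mul_eq_intCast hn ht (by push_cast; exact hz)
  obtain ⟨j', hj', rfl⟩ := exists_nat_le_eq_div_of_mul_eq_intCast hn ht' (by push_cast; exact hz')
  exact ⟨j, j', hj, hj', by push_cast; rfl, by push_cast; rfl⟩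
end
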